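/- arXiv:1709.05214 — 8 statements merged into one kernel-verified Lean document; each statement's English description precedes it below -/
import Mathlib

section
/- If C is a mutually uncorrelated code of length n ≥ 2 over an alphabet of size q, then |C| ≤ q^n / (2n). -/
open Finset

section MU
variable {q n : ℕ}

/-- occurrence of the pattern `a` in the cyclic word `w` at position `p` -/
def Occ {m : ℕ} (w : ZMod m → Fin q) (p : ZMod m) (a : Fin n → Fin q) : Prop :=
  ∀ i : Fin n, w (p + ((i : ℕ) : ZMod m)) = a i

/-- mutual uncorrelatedness, function version: no nonempty proper prefix of `b`
equals a suffix of `a`. -/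
def MUfun (C' : Finset (Fin n → Fin q)) : Prop :=
  ∀ a ∈ C', ∀ b ∈ C', ∀ ℓ : ℕ, 0 < ℓ → ℓ < n →
    ∃ i : ℕ, ∃ h : i < ℓ ∧ n - ℓ + i < n ∧ i < n,
      b ⟨i, h.2.2⟩ ≠ a ⟨n - ℓ + i, h.2.1⟩

lemma natCast_val_self {m : ℕ} [NeZero m] (a : ZMod m) : ((a.val : ZMod m)) = a := by
  have := ZMod.natCast_val (R := ZMod m) a
  simpa [ZMod.cast_id] using this

/-- two occurrences cannot overlap at a shift `1 ≤ d ≤ n-1` -/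
lemma overlap {m : ℕ} [NeZero m] {C' : Finset (Fin n → Fin q)} (hmu : MUfun C')
    {w : ZMod m → Fin q} {p₁ p₂ : ZMod m} {a b : Fin n → Fin q}
    (ha : a ∈ C') (hb : b ∈ C') (h₁ : Occ w p₁ a) (h₂ : Occ w p₂ b)
    (hd1 : 1 ≤ (p₂ - p₁).val) (hd2 : (p₂ - p₁).val ≤ n - 1) : False := by
  set d := (p₂ - p₁).val with hd
  have hdn : d < n := by omega
  have hp₂ : p₂ = p₁ + (d : ZMod m) := by
    rw [hd, natCast_val_self]; ring
  obtain ⟨i, hI, hne⟩ := hmu a ha b hb (n - d) (by omega) (by omega)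
  apply hne
  have e1 : w (p₂ + ((i : ℕ) : ZMod m)) = b ⟨i, hI.2.2⟩ := h₂ ⟨i, hI.2.2⟩
  have e2 : w (p₁ + ((d + i : ℕ) : ZMod m)) = a ⟨d + i, by omega⟩ := h₁ ⟨d + i, by omega⟩
  have e3 : p₁ + ((d + i : ℕ) : ZMod m) = p₂ + ((i : ℕ) : ZMod m) := by
    rw [hp₂]; push_cast; ring
  have e4 : a (⟨d + i, by omega⟩ : Fin n) = a ⟨n - (n - d) + i, hI.2.1⟩ :=
    congrArg a (Fin.ext (by simp; omega))
  rw [← e4, ← e2, e3, e1]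

/-- at most distance constraint: in a cyclic word of length `m ≤ 2n-1`, occurrences are unique -/
lemma occ_unique {m : ℕ} [NeZero m] {C' : Finset (Fin n → Fin q)} (hmu : MUfun C')
    (hm : m ≤ 2 * n - 1) (hn : 1 ≤ n)
    {w : ZMod m → Fin q} {p₁ p₂ : ZMod m} {a b : Fin n → Fin q}
    (ha : a ∈ C') (hb : b ∈ C') (h₁ : Occ w p₁ a) (h₂ : Occ w p₂ b) : p₁ = p₂ := by
  by_contra hne
  have hm0 : 0 < m := Nat.pos_of_ne_zero (NeZero.ne m)
  set d := (p₂ - p₁).val with hd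
  have hd0 : d ≠ 0 := by
    rw [hd, Ne, ZMod.val_eq_zero, sub_eq_zero]
    exact fun h => hne h.symm
  have hdlt : d < m := ZMod.val_lt _
  rcases le_or_gt d (n - 1) with h | h
  · exact overlap hmu ha hb h₁ h₂ (by omega) h
  · have hneg : (p₁ - p₂).val = m - d := by
      have : p₁ - p₂ = -(p₂ - p₁) := by ring
      rw [this, ZMod.neg_val]
      simp only [hd]
      rw [if_neg]
      intro h0
      exact hd0 (by rw [hd, h0]; simp [ZMod.val_zero])
    exact overlap hmu hb ha h₂ h₁ (by omega) (by omega)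




/-- build a cyclic word with pattern `a` at position `p` and the rest given by `u` -/
def mkWord {m : ℕ} [NeZero m] (a : Fin n → Fin q) (p : ZMod m) (u : Fin (m - n) → Fin q) :
    ZMod m → Fin q :=
  fun t => if h : (t - p).val < n then a ⟨(t - p).val, h⟩
           else u ⟨(t - p).val - n, by have := ZMod.val_lt (t - p); omega⟩

lemma val_add_cast {m : ℕ} [NeZero m] (p : ZMod m) {k : ℕ} (hk : k < m) :
    ((p + (k : ZMod m)) - p).val = k := by
  rw [add_sub_cancel_left, ZMod.val_cast_of_lt hk]

lemma mkWord_occ {m : ℕ} [NeZero m] (hnm : n ≤ m) (a : Fin n → Fin q) (p : ZMod m)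
    (u : Fin (m - n) → Fin q) : Occ (mkWord a p u) p a := by
  intro i
  have hi : (i : ℕ) < m := lt_of_lt_of_le i.isLt hnm
  simp only [mkWord, val_add_cast p hi]
  rw [dif_pos i.isLt]

lemma mkWord_rest {m : ℕ} [NeZero m] (a : Fin n → Fin q) (p : ZMod m)
    (u : Fin (m - n) → Fin q) (j : Fin (m - n)) :
    mkWord a p u (p + (((n + (j : ℕ)) : ℕ) : ZMod m)) = u j := by
  have hj : n + (j : ℕ) < m := by have := j.isLt; omega
  simp only [mkWord, val_add_cast p hj]
  rw [dif_neg (by omega)]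
  congr 1
  exact Fin.ext (by simp)


end MU

section Counts
variable {q n : ℕ}

lemma countA (hn : 2 ≤ n) (C' : Finset (Fin n → Fin q)) (hmu : MUfun C') :
    C'.card * ((2 * n - 1) * q ^ (n - 1)) ≤ q ^ (2 * n - 1) := by
  haveI : NeZero (2 * n - 1) := ⟨by omega⟩
  have hnm : n ≤ 2 * n - 1 := by omega
  have key : Fintype.card (↥C' × ZMod (2*n-1) × (Fin ((2*n-1) - n) → Fin q))
      ≤ Fintype.card (ZMod (2*n-1) → Fin q) := by
    apply Fintype.card_le_of_injective
      (fun x : ↥C' × ZMod (2*n-1) × (Fin ((2*n-1) - n) → Fin q) =>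
        mkWord x.1.1 x.2.1 x.2.2)
    intro x y hxy
    replace hxy : mkWord x.1.1 x.2.1 x.2.2 = mkWord y.1.1 y.2.1 y.2.2 := hxy
    have hox : Occ (mkWord x.1.1 x.2.1 x.2.2) x.2.1 x.1.1 := mkWord_occ hnm _ _ _
    have hoy' : Occ (mkWord x.1.1 x.2.1 x.2.2) y.2.1 y.1.1 := by
      rw [hxy]; exact mkWord_occ hnm _ _ _
    have hp : x.2.1 = y.2.1 :=
      occ_unique hmu (le_refl _) (by omega) x.1.2 y.1.2 hox hoy'
    rw [← hp] at hoy'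
    have ha : x.1.1 = y.1.1 := funext fun i => by
      rw [← hox i, ← hoy' i]
    have hu : x.2.2 = y.2.2 := funext fun j => by
      rw [← mkWord_rest x.1.1 x.2.1 x.2.2 j, ← mkWord_rest y.1.1 y.2.1 y.2.2 j,
        hxy, hp]
    exact Prod.ext (Subtype.ext ha) (Prod.ext hp hu)
  rw [Fintype.card_prod, Fintype.card_prod, Fintype.card_coe, ZMod.card,
    Fintype.card_fun, Fintype.card_fun, Fintype.card_fin, ZMod.card,
    Fintype.card_fin] at key
  have he : (2 * n - 1) - n = n - 1 := by omega
  rw [he] at key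
  exact key

end Counts

section Gap
variable {q n : ℕ}

lemma gap {m : ℕ} [NeZero m] {C' : Finset (Fin n → Fin q)} (hmu : MUfun C')
    (hm : m = 3 * n - 1) (hn : 2 ≤ n)
    {w : ZMod m → Fin q} {p₁ p₂ : ZMod m} {a b : Fin n → Fin q}
    (ha : a ∈ C') (hb : b ∈ C') (h₁ : Occ w p₁ a) (h₂ : Occ w p₂ b) (hne : p₁ ≠ p₂) :
    n ≤ (p₂ - p₁).val ∧ (p₂ - p₁).val ≤ 2 * n - 1 := by
  set d := (p₂ - p₁).val with hd
  have hd0 : d ≠ 0 := by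
    rw [hd, Ne, ZMod.val_eq_zero, sub_eq_zero]
    exact fun h => hne h.symm
  have hdlt : d < m := ZMod.val_lt _
  constructor
  · by_contra h
    exact overlap hmu ha hb h₁ h₂ (by omega) (by omega)
  · by_contra h
    have hneg : (p₁ - p₂).val = m - d := by
      have h2 : p₁ - p₂ = -(p₂ - p₁) := by ring
      rw [h2, ZMod.neg_val, if_neg]
      intro h0
      exact hd0 (by rw [hd, h0]; simp [ZMod.val_zero])
    exact overlap hmu hb ha h₂ h₁ (by omega) (by omega)

end Gap

section Recon
variable {q n : ℕ}

lemma reconstruct {m : ℕ} [NeZero m] (hn : 2 ≤ n) (hm : m = 3 * n - 1)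
    {w w' : ZMod m → Fin q} {p p' p₂ p₂' : ZMod m} {d d' : ℕ}
    (hd1 : n ≤ d) (hd2 : d ≤ 2 * n - 1) (hdd : d = d') (hpp : p = p')
    (hp2 : p₂ = p + (d : ZMod m)) (hp2' : p₂' = p' + (d' : ZMod m))
    {A A' B B' : Fin n → Fin q} (hAA : A = A') (hBB : B = B')
    (hA : Occ w p A) (hB : Occ w p₂ B)
    (hA' : Occ w' p' A') (hB' : Occ w' p₂' B')
    (hu : ∀ j : Fin (m - 2 * n),
      (if (j : ℕ) < d - n then w (p + (((n + (j : ℕ)) : ℕ) : ZMod m))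
       else w (p + (((2 * n + (j : ℕ)) : ℕ) : ZMod m)))
      = (if (j : ℕ) < d' - n then w' (p' + (((n + (j : ℕ)) : ℕ) : ZMod m))
         else w' (p' + (((2 * n + (j : ℕ)) : ℕ) : ZMod m)))) :
    w = w' := by
  subst hdd hpp hp2 hp2' hAA hBB
  funext t
  have hilt : ((t - p).val) < m := ZMod.val_lt _
  set i := (t - p).val with hidef
  have ht : t = p + (i : ZMod m) := by rw [hidef, natCast_val_self]; ring
  rcases lt_or_ge i n with hc1 | hc1
  · calc w t = w (p + ((i : ℕ) : ZMod m)) := by rw [← ht]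
      _ = A ⟨i, hc1⟩ := hA ⟨i, hc1⟩
      _ = w' (p + ((i : ℕ) : ZMod m)) := (hA' ⟨i, hc1⟩).symm
      _ = w' t := by rw [← ht]
  · rcases lt_or_ge i d with hc2 | hc2
    · have hj : i - n < m - 2 * n := by omega
      have h5j := hu ⟨i - n, hj⟩
      rw [if_pos (show ((⟨i - n, hj⟩ : Fin (m - 2*n)) : ℕ) < d - n by simp; omega),
        if_pos (show ((⟨i - n, hj⟩ : Fin (m - 2*n)) : ℕ) < d - n by simp; omega)] at h5j
      simp only [Fin.val_mk] at h5j
      rw [(show n + (i - n) = i by omega)] at h5j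
      calc w t = w (p + ((i : ℕ) : ZMod m)) := by rw [← ht]
        _ = w' (p + ((i : ℕ) : ZMod m)) := h5j
        _ = w' t := by rw [← ht]
    · rcases lt_or_ge i (d + n) with hc3 | hc3
      · have e3 : (p + (d : ZMod m)) + (((i - d : ℕ)) : ZMod m) = p + ((i : ℕ) : ZMod m) := by
          rw [add_assoc, ← Nat.cast_add, (show d + (i - d) = i by omega)]
        have hlt : i - d < n := by omega
        have ex := hB ⟨i - d, hlt⟩
        have ey := hB' ⟨i - d, hlt⟩
        rw [e3] at ex ey
        calc w t = w (p + ((i : ℕ) : ZMod m)) := by rw [← ht]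
          _ = B ⟨i - d, hlt⟩ := ex
          _ = w' (p + ((i : ℕ) : ZMod m)) := ey.symm
          _ = w' t := by rw [← ht]
      · have hj : i - 2 * n < m - 2 * n := by omega
        have h5j := hu ⟨i - 2 * n, hj⟩
        rw [if_neg (show ¬ ((⟨i - 2*n, hj⟩ : Fin (m - 2*n)) : ℕ) < d - n by simp; omega),
          if_neg (show ¬ ((⟨i - 2*n, hj⟩ : Fin (m - 2*n)) : ℕ) < d - n by simp; omega)] at h5j
        simp only [Fin.val_mk] at h5j
        rw [(show 2 * n + (i - 2 * n) = i by omega)] at h5j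
        calc w t = w (p + ((i : ℕ) : ZMod m)) := by rw [← ht]
          _ = w' (p + ((i : ℕ) : ZMod m)) := h5j
          _ = w' t := by rw [← ht]

end Recon

section CountB
variable {q n : ℕ}

lemma countB (hq : 0 < q) (hn : 2 ≤ n) (C' : Finset (Fin n → Fin q)) (hmu : MUfun C')
    (hM : C'.card ≠ 0) :
    2 * (C'.card * ((3 * n - 1) * q ^ ((3 * n - 1) - n)))
      ≤ 2 * q ^ (3 * n - 1)
        + (3 * n - 1) * (n * (C'.card * (C'.card * q ^ ((3 * n - 1) - 2 * n)))) := by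
  classical
  haveI : NeZero (3 * n - 1) := ⟨by omega⟩
  have hnm : n ≤ 3 * n - 1 := by omega
  set K : (ZMod (3*n-1) → Fin q) → Finset (ZMod (3*n-1)) :=
    fun w => univ.filter (fun p => ∃ a ∈ C', Occ w p a) with hK
  set S : Finset (Σ _ : (ZMod (3*n-1) → Fin q), ZMod (3*n-1)) :=
    univ.sigma (fun w => K w) with hS
  set P : Finset (Σ _ : (ZMod (3*n-1) → Fin q), ZMod (3*n-1) × ZMod (3*n-1)) :=
    univ.sigma (fun w => (K w).offDiag) with hP
  -- membership spec helpers
  have memK : ∀ (w : ZMod (3*n-1) → Fin q) (p : ZMod (3*n-1)),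
      p ∈ K w ↔ ∃ a, a ∈ C' ∧ Occ w p a := by
    intro w p
    rw [hK]
    simp only [Finset.mem_filter, Finset.mem_univ, true_and]
  have spec1 : ∀ x : (Σ _ : (ZMod (3*n-1) → Fin q), ZMod (3*n-1) × ZMod (3*n-1)),
      x ∈ P → ∃ a, a ∈ C' ∧ Occ x.1 x.2.1 a := by
    intro x hx
    have h2 := (Finset.mem_sigma.mp hx).2
    exact (memK _ _).mp (Finset.mem_offDiag.mp h2).1
  have spec2 : ∀ x : (Σ _ : (ZMod (3*n-1) → Fin q), ZMod (3*n-1) × ZMod (3*n-1)),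
      x ∈ P → ∃ a, a ∈ C' ∧ Occ x.1 x.2.2 a := by
    intro x hx
    have h2 := (Finset.mem_sigma.mp hx).2
    exact (memK _ _).mp (Finset.mem_offDiag.mp h2).2.1
  have specNe : ∀ x : (Σ _ : (ZMod (3*n-1) → Fin q), ZMod (3*n-1) × ZMod (3*n-1)),
      x ∈ P → x.2.1 ≠ x.2.2 := by
    intro x hx
    have h2 := (Finset.mem_sigma.mp hx).2
    exact (Finset.mem_offDiag.mp h2).2.2
  -- Step 1: lower bound on S.card
  have hL : C'.card * ((3*n-1) * q ^ ((3*n-1) - n)) ≤ S.card := by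
    have key := Finset.card_le_card_of_injOn
      (f := fun x : ↥C' × ZMod (3*n-1) × (Fin ((3*n-1) - n) → Fin q) =>
        (⟨mkWord x.1.1 x.2.1 x.2.2, x.2.1⟩ : Σ _ : (ZMod (3*n-1) → Fin q), ZMod (3*n-1)))
      (s := univ) (t := S) ?_ ?_
    · simp only [Finset.card_univ, Fintype.card_prod, Fintype.card_coe, ZMod.card,
        Fintype.card_fun, Fintype.card_fin] at key
      exact key
    · intro x _
      rw [hS]
      refine Finset.mem_sigma.mpr ⟨Finset.mem_univ _, ?_⟩
      exact (memK _ _).mpr ⟨x.1.1, x.1.2, mkWord_occ hnm _ _ _⟩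
    · intro x _ y _ hxy
      have hw : mkWord x.1.1 x.2.1 x.2.2 = mkWord y.1.1 y.2.1 y.2.2 :=
        congrArg (fun z : (Σ _ : (ZMod (3*n-1) → Fin q), ZMod (3*n-1)) => z.fst) hxy
      have hp : x.2.1 = y.2.1 :=
        congrArg (fun z : (Σ _ : (ZMod (3*n-1) → Fin q), ZMod (3*n-1)) => z.snd) hxy
      have ha : x.1.1 = y.1.1 := funext fun i => by
        rw [← mkWord_occ hnm x.1.1 x.2.1 x.2.2 i, ← mkWord_occ hnm y.1.1 y.2.1 y.2.2 i,
          hw, hp]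
      have hu : x.2.2 = y.2.2 := funext fun j => by
        rw [← mkWord_rest x.1.1 x.2.1 x.2.2 j, ← mkWord_rest y.1.1 y.2.1 y.2.2 j, hw, hp]
      exact Prod.ext (Subtype.ext ha) (Prod.ext hp hu)
  -- Step 2: pointwise Bonferroni and summation
  have hptwise : ∀ k : ℕ, 2 * k ≤ 2 + (k * k - k) := by
    intro k
    cases k with
    | zero => simp
    | succ j =>
      have h1 : j ≤ j * j := by
        rcases Nat.eq_zero_or_pos j with h | h
        · simp [h]
        · exact Nat.le_mul_of_pos_left _ h
      have h2 : (j+1)*(j+1) = j*j + 2*j + 1 := by ring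
      omega
  have hmain : 2 * S.card ≤ 2 * q ^ (3*n-1) + P.card := by
    have e1 : S.card = ∑ w : (ZMod (3*n-1) → Fin q), (K w).card := by
      rw [hS, Finset.card_sigma]
    have e2 : P.card = ∑ w : (ZMod (3*n-1) → Fin q), ((K w).card * (K w).card - (K w).card) := by
      rw [hP, Finset.card_sigma]
      exact Finset.sum_congr rfl fun w _ => Finset.offDiag_card (K w)
    rw [e1, e2, Finset.mul_sum]
    calc ∑ w : (ZMod (3*n-1) → Fin q), 2 * (K w).card
        ≤ ∑ w : (ZMod (3*n-1) → Fin q), (2 + ((K w).card * (K w).card - (K w).card)) :=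
          Finset.sum_le_sum fun w _ => hptwise _
      _ = 2 * q ^ (3*n-1) + ∑ w : (ZMod (3*n-1) → Fin q), ((K w).card * (K w).card - (K w).card) := by
          rw [Finset.sum_add_distrib, Finset.sum_const, Finset.card_univ, smul_eq_mul]
          congr 1
          rw [Fintype.card_fun, ZMod.card, Fintype.card_fin, mul_comm]
  -- Step 3: upper bound on P.card
  obtain ⟨a₀, ha₀⟩ := Finset.card_pos.mp (Nat.pos_of_ne_zero hM)
  have hU : P.card ≤ (3*n-1) * (n * (C'.card * (C'.card * q ^ ((3*n-1) - 2*n)))) := by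
    have key := Finset.card_le_card_of_injOn
      (f := fun x : (Σ _ : (ZMod (3*n-1) → Fin q), ZMod (3*n-1) × ZMod (3*n-1)) =>
        if hx : x ∈ P then
          ((x.2.1, ⟨min ((x.2.2 - x.2.1).val - n) (n - 1), by omega⟩,
            ⟨(spec1 x hx).choose, (spec1 x hx).choose_spec.1⟩,
            ⟨(spec2 x hx).choose, (spec2 x hx).choose_spec.1⟩,
            fun j : Fin ((3*n-1) - 2*n) =>
              if (j : ℕ) < (x.2.2 - x.2.1).val - n
              then x.1 (x.2.1 + (((n + (j : ℕ)) : ℕ) : ZMod (3*n-1)))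
              else x.1 (x.2.1 + (((2 * n + (j : ℕ)) : ℕ) : ZMod (3*n-1)))) :
            ZMod (3*n-1) × Fin n × ↥C' × ↥C' × (Fin ((3*n-1) - 2*n) → Fin q))
        else (0, ⟨0, by omega⟩, ⟨a₀, ha₀⟩, ⟨a₀, ha₀⟩, fun _ => ⟨0, hq⟩))
      (s := P) (t := univ) (fun _ _ => Finset.mem_univ _) ?_
    · simp only [Finset.card_univ, Fintype.card_prod, Fintype.card_coe, ZMod.card,
        Fintype.card_fun, Fintype.card_fin] at key
      exact key
    · intro x hx' y hy' h
      have hx : x ∈ P := Finset.mem_coe.mp hx'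
      have hy : y ∈ P := Finset.mem_coe.mp hy'
      dsimp only at h
      rw [dif_pos hx, dif_pos hy] at h
      simp only [Prod.mk.injEq, Subtype.mk.injEq, Fin.mk.injEq] at h
      obtain ⟨h1, h2, h3, h4, h5⟩ := h
      obtain ⟨hA, hOx⟩ := (spec1 x hx).choose_spec
      obtain ⟨hB, hOx2⟩ := (spec2 x hx).choose_spec
      obtain ⟨hA', hOy⟩ := (spec1 y hy).choose_spec
      obtain ⟨hB', hOy2⟩ := (spec2 y hy).choose_spec
      have hgx := gap hmu rfl hn hA hB hOx hOx2 (specNe x hx)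
      have hgy := gap hmu rfl hn hA' hB' hOy hOy2 (specNe y hy)
      set dx := (x.2.2 - x.2.1).val with hdx
      set dy := (y.2.2 - y.2.1).val with hdy
      clear_value dx dy
      have hd : dx = dy := by
        rw [min_eq_left (by omega : dx - n ≤ n - 1),
          min_eq_left (by omega : dy - n ≤ n - 1)] at h2
        omega
      have hp2x : x.2.2 = x.2.1 + (dx : ZMod (3*n-1)) := by
        rw [hdx, natCast_val_self]; ring
      have hp2y : y.2.2 = y.2.1 + (dy : ZMod (3*n-1)) := by
        rw [hdy, natCast_val_self]; ring
      have hw : x.1 = y.1 :=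
        reconstruct hn rfl hgx.1 hgx.2 hd h1 hp2x hp2y h3 h4 hOx hOx2 hOy hOy2
          (fun j => congrFun h5 j)
      have hp2 : x.2.2 = y.2.2 := by rw [hp2x, hp2y, h1, hd]
      exact Sigma.ext hw (heq_of_eq (Prod.ext h1 hp2))
  calc 2 * (C'.card * ((3 * n - 1) * q ^ ((3 * n - 1) - n)))
      ≤ 2 * S.card := Nat.mul_le_mul_left 2 hL
    _ ≤ 2 * q ^ (3*n-1) + P.card := hmain
    _ ≤ 2 * q ^ (3 * n - 1)
        + (3 * n - 1) * (n * (C'.card * (C'.card * q ^ ((3 * n - 1) - 2 * n)))) :=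
        Nat.add_le_add_left hU _

end CountB

section Count2
variable {q : ℕ}

lemma count2 (C' : Finset (Fin 2 → Fin q)) (hmu : MUfun C') :
    ∃ l r : ℕ, l + r ≤ q ∧ C'.card ≤ l * r := by
  classical
  set L := C'.image (fun a => a ⟨0, by omega⟩) with hL
  set R := C'.image (fun a => a ⟨1, by omega⟩) with hR
  refine ⟨L.card, R.card, ?_, ?_⟩
  · have hdisj : Disjoint L R := by
      rw [Finset.disjoint_left]
      intro x hxL hxR
      obtain ⟨a, ha, hax⟩ := Finset.mem_image.mp hxL
      obtain ⟨b, hb, hbx⟩ := Finset.mem_image.mp hxR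
      obtain ⟨i, hI, hne⟩ := hmu b hb a ha 1 (by omega) (by omega)
      apply hne
      have hi0 : i = 0 := by omega
      subst hi0
      have e1 : a ⟨0, hI.2.2⟩ = x := hax
      have e2 : b (⟨2 - 1 + 0, hI.2.1⟩ : Fin 2) = x := by
        have : (⟨2 - 1 + 0, hI.2.1⟩ : Fin 2) = ⟨1, by omega⟩ := Fin.ext (by norm_num)
        rw [this]
        exact hbx
      rw [e1, e2]
    calc L.card + R.card = (L ∪ R).card := (Finset.card_union_of_disjoint hdisj).symm
      _ ≤ (univ : Finset (Fin q)).card := Finset.card_le_card (Finset.subset_univ _)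
      _ = q := by simp
  · have key := Finset.card_le_card_of_injOn
      (f := fun a : Fin 2 → Fin q => (a ⟨0, by omega⟩, a ⟨1, by omega⟩))
      (s := C') (t := L ×ˢ R) ?_ ?_
    · rw [Finset.card_product] at key
      exact key
    · intro a ha
      exact Finset.mem_product.mpr
        ⟨Finset.mem_image_of_mem _ ha, Finset.mem_image_of_mem _ ha⟩
    · intro a ha b hb hab
      simp only [Prod.mk.injEq] at hab
      funext i
      have hi : i = ⟨0, by omega⟩ ∨ i = ⟨1, by omega⟩ := by
        rcases i with ⟨iv, hiv⟩
        have h : iv = 0 ∨ iv = 1 := by omega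
        rcases h with h | h
        · exact Or.inl (Fin.ext h)
        · exact Or.inr (Fin.ext h)
      rcases hi with h | h <;> rw [h]
      · exact hab.1
      · exact hab.2

end Count2

set_option maxHeartbeats 3000000 in
/-- If C is a mutually uncorrelated code of length n ≥ 2 over an alphabet of size q,
then |C| ≤ q^n / (2n). -/
theorem stmt_1 (q n : ℕ) (hn : 2 ≤ n) (C : Finset (List (Fin q)))
    (hlen : ∀ w ∈ C, w.length = n)
    (hMU : ∀ a ∈ C, ∀ b ∈ C, ∀ p : List (Fin q),
      p ≠ [] → p.length < n → p <+: a → ¬ p <:+ b) :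
    (C.card : ℝ) ≤ (q : ℝ) ^ n / (2 * n) := by
  classical
  have h2n : (0:ℝ) < 2 * n := by positivity
  rcases Nat.eq_zero_or_pos q with hq0 | hq
  · have hC : C = ∅ := by
      rw [Finset.eq_empty_iff_forall_notMem]
      intro w hw
      have hwl := hlen w hw
      cases w with
      | nil => simp at hwl; omega
      | cons x _ => subst hq0; exact absurd x.2 (by omega)
    rw [hC]
    simp
    positivity
  rcases Nat.eq_zero_or_pos C.card with hM0 | hM
  · rw [hM0]
    simp
    positivity
  -- transfer to function words
  set fn : List (Fin q) → (Fin n → Fin q) := fun w i => w.getD i ⟨0, hq⟩ with hfn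
  have hfnget : ∀ w, ∀ hw : w ∈ C, ∀ (i : ℕ) (hi : i < n),
      fn w ⟨i, hi⟩ = w[i]'(by rw [hlen w hw]; exact hi) := by
    intro w hw i hi
    exact List.getD_eq_getElem w _ _
  have hinj : Set.InjOn fn C := by
    intro a ha b hb hab
    apply List.ext_getElem (by rw [hlen a ha, hlen b hb])
    intro i h1 h2
    have hi : i < n := by rw [← hlen a ha]; exact h1
    rw [← hfnget a ha i hi, ← hfnget b hb i hi, hab]
  set C' : Finset (Fin n → Fin q) := C.image fn with hC'
  have hcard : C'.card = C.card := Finset.card_image_of_injOn hinj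
  have hmu : MUfun C' := by
    intro a' ha' b' hb' ℓ hl1 hl2
    obtain ⟨a, ha, rfl⟩ := Finset.mem_image.mp ha'
    obtain ⟨b, hb, rfl⟩ := Finset.mem_image.mp hb'
    by_contra hcon
    push_neg at hcon
    have hal : a.length = n := hlen a ha
    have hbl : b.length = n := hlen b hb
    have hlt : (b.take ℓ).length = ℓ := by rw [List.length_take, hbl]; omega
    apply hMU b hb a ha (b.take ℓ) ?_ ?_ (List.take_prefix ℓ b)
    · have heq : b.take ℓ = a.drop (n - ℓ) := by
        apply List.ext_getElem (by rw [hlt, List.length_drop, hal]; omega)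
        intro i h1 h2
        have hiℓ : i < ℓ := by rw [hlt] at h1; exact h1
        rw [List.getElem_take, List.getElem_drop]
        have hc := hcon i ⟨hiℓ, by omega, by omega⟩
        rw [hfnget b hb i (by omega), hfnget a ha (n - ℓ + i) (by omega)] at hc
        exact hc
      rw [heq]
      exact List.drop_suffix _ _
    · intro hnil
      rw [hnil] at hlt
      simp at hlt
      omega
    · rw [hlt]; omega
  -- main case split
  by_cases hn2 : n = 2
  · subst hn2
    obtain ⟨l, r, hlr, hM2⟩ := count2 C' hmu
    rw [hcard] at hM2
    rw [le_div_iff₀ h2n]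
    have c1 : (C.card : ℝ) ≤ (l : ℝ) * r := by exact_mod_cast hM2
    have c2 : (l : ℝ) + r ≤ q := by exact_mod_cast hlr
    have c3 : (0:ℝ) ≤ l := by positivity
    have c4 : (0:ℝ) ≤ r := by positivity
    have c5 : ((l:ℝ) + r) * ((l:ℝ) + r) ≤ (q:ℝ) * q :=
      mul_self_le_mul_self (by positivity) c2
    rw [pow_two]
    push_cast
    nlinarith [sq_nonneg ((l:ℝ) - r)]
  · have hn3 : 3 ≤ n := by omega
    have hA := countA hn C' hmu
    have hB := countB hq hn C' hmu (by rw [hcard]; omega)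
    rw [hcard] at hA hB
    rw [show (3*n-1) - n = 2*n-1 by omega, show (3*n-1) - 2*n = n-1 by omega] at hB
    have hcast1 : ((2*n-1 : ℕ) : ℝ) = 2*(n:ℝ) - 1 := by
      rw [Nat.cast_sub (by omega : 1 ≤ 2*n)]
      push_cast
      ring
    have hcast2 : ((3*n-1 : ℕ) : ℝ) = 3*(n:ℝ) - 1 := by
      rw [Nat.cast_sub (by omega : 1 ≤ 3*n)]
      push_cast
      ring
    have hpow1 : ((q:ℝ)) ^ (2*n-1) = (q:ℝ)^n * (q:ℝ)^(n-1) := by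
      rw [← pow_add]
      congr 1
      omega
    have hpow2 : ((q:ℝ)) ^ (3*n-1) = (q:ℝ)^n * ((q:ℝ)^n * (q:ℝ)^(n-1)) := by
      rw [← pow_add, ← pow_add]
      congr 1
      omega
    have hc0 : (0:ℝ) < (q:ℝ)^(n-1) := by positivity
    -- cast A
    have hAr : (C.card : ℝ) * (((2*n-1 : ℕ) : ℝ) * (q:ℝ)^(n-1)) ≤ (q:ℝ)^(2*n-1) := by
      exact_mod_cast hA
    rw [hcast1, hpow1] at hAr
    have hA2 : (C.card : ℝ) * (2*(n:ℝ) - 1) ≤ (q:ℝ)^n := by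
      apply le_of_mul_le_mul_right _ hc0
      calc (C.card : ℝ) * (2*(n:ℝ) - 1) * ((q:ℝ)^(n-1))
          = (C.card : ℝ) * ((2*(n:ℝ) - 1) * (q:ℝ)^(n-1)) := by ring
        _ ≤ (q:ℝ)^n * (q:ℝ)^(n-1) := hAr
    -- cast B
    have hBr : 2 * ((C.card : ℝ) * (((3*n-1 : ℕ) : ℝ) * (q:ℝ)^(2*n-1)))
        ≤ 2 * (q:ℝ)^(3*n-1)
          + ((3*n-1 : ℕ) : ℝ) * ((n:ℝ) * ((C.card : ℝ) * ((C.card : ℝ) * (q:ℝ)^(n-1)))) := by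
      exact_mod_cast hB
    rw [hcast2, hpow1, hpow2] at hBr
    have hB2 : 2 * ((C.card : ℝ) * ((3*(n:ℝ)-1) * (q:ℝ)^n))
        ≤ 2 * ((q:ℝ)^n * (q:ℝ)^n) + (3*(n:ℝ)-1) * ((n:ℝ) * ((C.card : ℝ) * (C.card : ℝ))) := by
      apply le_of_mul_le_mul_right _ hc0
      calc 2 * ((C.card : ℝ) * ((3*(n:ℝ)-1) * (q:ℝ)^n)) * ((q:ℝ)^(n-1))
          = 2 * ((C.card : ℝ) * ((3*(n:ℝ)-1) * ((q:ℝ)^n * (q:ℝ)^(n-1)))) := by ring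
        _ ≤ 2 * ((q:ℝ)^n * ((q:ℝ)^n * (q:ℝ)^(n-1)))
            + (3*(n:ℝ)-1) * ((n:ℝ) * ((C.card : ℝ) * ((C.card : ℝ) * (q:ℝ)^(n-1)))) := hBr
        _ = (2 * ((q:ℝ)^n * (q:ℝ)^n)
            + (3*(n:ℝ)-1) * ((n:ℝ) * ((C.card : ℝ) * (C.card : ℝ)))) * ((q:ℝ)^(n-1)) := by ring
    have hM1 : (1:ℝ) ≤ (C.card : ℝ) := by exact_mod_cast hM
    have hN3 : (3:ℝ) ≤ (n:ℝ) := by exact_mod_cast hn3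
    rw [le_div_iff₀ h2n]
    by_contra hcon
    push_neg at hcon
    have hM0 : (0:ℝ) < (C.card : ℝ) := by linarith
    have key1 : (0:ℝ) ≤ ((q:ℝ)^n - (C.card : ℝ) * (2*(n:ℝ)-1))
        * ((C.card : ℝ) * (2 * (n:ℝ)) - (q:ℝ)^n) :=
      mul_nonneg (by linarith) (by linarith)
    have key2 : 2*(n:ℝ) * ((C.card : ℝ) * (q:ℝ)^n)
        < 2*(n:ℝ) * ((C.card : ℝ) * ((C.card : ℝ) * (2 * (n:ℝ)))) := by
      apply mul_lt_mul_of_pos_left _ (by linarith : (0:ℝ) < 2*(n:ℝ))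
      exact mul_lt_mul_of_pos_left hcon hM0
    have key3 : (0:ℝ) ≤ ((C.card : ℝ) * (C.card : ℝ)) * ((n:ℝ) * ((n:ℝ) - 3)) :=
      mul_nonneg (mul_nonneg hM0.le hM0.le) (mul_nonneg (by linarith) (by linarith))
    nlinarith [key1, hB2, key2, key3]
end

section
/- If C is a κ-weakly mutually uncorrelated code of length n over an alphabet of size q, with 1 ≤ κ < n, then |C| ≤ q^n / (n - κ + 1). -/
/-- If C is a κ-weakly mutually uncorrelated code of length n over an alphabet of
size q, with 1 ≤ κ < n, then |C| ≤ q^n / (n - κ + 1). -/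
theorem stmt_2 (q n κ : ℕ) (hκ1 : 1 ≤ κ) (hκ2 : κ < n) (C : Finset (List (Fin q)))
    (hlen : ∀ w ∈ C, w.length = n)
    (hWMU : ∀ a ∈ C, ∀ b ∈ C, ∀ p : List (Fin q),
      κ ≤ p.length → p.length < n → p <+: a → ¬ p <:+ b) :
    (C.card : ℝ) ≤ (q : ℝ) ^ n / ((n : ℝ) - κ + 1) := by
  have hden : (0:ℝ) < (n:ℝ) - κ + 1 := by
    have : (κ:ℝ) < n := by exact_mod_cast hκ2
    linarith
  rcases Nat.eq_zero_or_pos q with hq | hq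
  · subst hq
    have hC : C = ∅ := by
      ext w
      simp only [Finset.notMem_empty, iff_false]
      intro hw
      have hl := hlen w hw
      cases w with
      | nil => simp at hl; omega
      | cons a _ => exact absurd a.2 (by simp)
    rw [hC]
    simp only [Finset.card_empty, Nat.cast_zero]
    positivity
  · have d0 : Fin q := ⟨0, hq⟩
    -- undoing a rotation
    have hrot : ∀ w : List (Fin q), w.length = n → ∀ k, k ≤ n →
        (w.rotate k).rotate (n - k) = w := by
      intro w hw k hk
      rw [List.rotate_rotate]
      have : k + (n - k) = n := by omega
      rw [this, ← hw, List.rotate_length]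
    -- key: distinct rotation amounts of codewords never collide
    have key : ∀ a ∈ C, ∀ b ∈ C, ∀ i j : ℕ, i ≤ n - κ → j ≤ n - κ → i < j →
        a.rotate i ≠ b.rotate j := by
      intro a ha b hb i j hi hj hij heq
      have haL := hlen a ha
      have hbL := hlen b hb
      set d := j - i with hd
      have hd1 : 1 ≤ d := by omega
      have hd2 : d ≤ n - κ := by omega
      have hab : a = b.rotate d := by
        have h1 : (a.rotate i).rotate (n - i) = a := hrot a haL i (by omega)
        have h2 : (b.rotate j).rotate (n - i) = b.rotate d := by
          rw [List.rotate_rotate]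
          have h3 : j + (n - i) = n + d := by omega
          rw [h3, ← List.rotate_rotate, ← hbL, List.rotate_length]
        rw [← h1, heq, h2]
      have hdrop : b.rotate d = b.drop d ++ b.take d :=
        List.rotate_eq_drop_append_take (by omega)
      set p := b.drop d with hp
      have hpl : p.length = n - d := by rw [hp, List.length_drop, hbL]
      refine hWMU a ha b hb p (by omega) (by omega) ?_ (List.drop_suffix d b)
      exact ⟨b.take d, by rw [← hdrop, ← hab]⟩
    -- injective map into functions Fin n → Fin q
    set s : Finset (List (Fin q) × ℕ) := C ×ˢ Finset.range (n - κ + 1) with hs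
    set g : List (Fin q) × ℕ → (Fin n → Fin q) :=
      fun p => fun k => (p.1.rotate p.2).getD k.val d0 with hg
    have hinj : Set.InjOn g s := by
      rintro ⟨a, i⟩ hai ⟨b, j⟩ hbj hgeq
      simp only [hs, Finset.mem_coe, Finset.mem_product, Finset.mem_range] at hai hbj
      obtain ⟨ha, hi⟩ := hai
      obtain ⟨hb, hj⟩ := hbj
      have haL := hlen a ha
      have hbL := hlen b hb
      have hlA : (a.rotate i).length = n := by rw [List.length_rotate, haL]
      have hlB : (b.rotate j).length = n := by rw [List.length_rotate, hbL]
      have hlists : a.rotate i = b.rotate j := by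
        apply List.ext_getElem (by rw [hlA, hlB])
        intro k h1 h2
        have := congrFun hgeq ⟨k, by omega⟩
        simp only [hg] at this
        rwa [List.getD_eq_getElem _ _ h1, List.getD_eq_getElem _ _ h2] at this
      rcases lt_trichotomy i j with h | h | h
      · exact absurd hlists (key a ha b hb i j (by omega) (by omega) h)
      · subst h
        have : a = b := by
          have h1 : (a.rotate i).rotate (n - i) = a := hrot a haL i (by omega)
          have h2 : (b.rotate i).rotate (n - i) = b := hrot b hbL i (by omega)
          rw [← h1, hlists, h2]
        rw [this]
      · exact absurd hlists.symm (key b hb a ha j i (by omega) (by omega) h)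
    have hcard : C.card * (n - κ + 1) ≤ q ^ n := by
      have h1 := Finset.card_le_card_of_injOn g (fun p _ => Finset.mem_univ _) hinj
      rwa [hs, Finset.card_product, Finset.card_range, Finset.card_univ,
        Fintype.card_fun, Fintype.card_fin, Fintype.card_fin] at h1
    rw [le_div_iff₀ hden]
    have hcast : (n:ℝ) - κ + 1 = ((n - κ + 1 : ℕ) : ℝ) := by
      push_cast [Nat.cast_sub hκ2.le]
      ring
    rw [hcast]
    exact_mod_cast hcard
end

section
/- Let C₁ ⊆ Σ^{n-κ+1} be a mutually uncorrelated code and C₂ = Σ^{κ-1} be the full set of sequences of length κ-1, where 1 ≤ κ ≤ n. Then the concatenation code C = { a·b : a ∈ C₁, b ∈ C₂ } ⊆ Σ^n is a κ-weakly mutually uncorrelated code of size |C₁| · q^{κ-1}. -/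
/-!
A prefix `p` of `a ++ b` that is a suffix of `a' ++ b'`, with `|b'| = κ - 1 < |p|`, keeps a
nonempty head `p.take (|p| - (κ - 1))`: it is a prefix of `a` (it is short enough to lie inside
`a`) and a suffix of `a'` (the tail of `p` is exactly covered by `b'`), contradicting that the
first halves come from a mutually uncorrelated code. The count follows because appending is
injective on pairs whose first components share a length, and there are `q ^ (κ - 1)` words of
length `κ - 1`.
-/

namespace List

variable {α : Type*}

theorem IsPrefix.take_prefix_of_append {p a b : List α} (h : p <+: a ++ b) {m : ℕ}
    (hm : m ≤ a.length) : p.take m <+: a := by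
  have h' := h.take m
  rw [take_append_of_le_length hm] at h'
  exact h'.trans (a.take_prefix m)

theorem IsSuffix.take_suffix_of_append {p a b : List α} (h : p <:+ a ++ b) {m : ℕ}
    (hm : p.length = m + b.length) : p.take m <:+ a := by
  obtain ⟨t, ht⟩ := h
  have hsplit : (t ++ p.take m) ++ p.drop m = a ++ b := by
    rw [append_assoc, take_append_drop, ht]
  exact ⟨t, (append_inj' hsplit (by rw [length_drop]; omega)).1⟩

theorem not_suffix_append_of_prefix_append {ℓ k : ℕ} {a a' b b' p : List α}
    (hMU : ∀ r : List α, r ≠ [] → r.length < ℓ → r <+: a → ¬ r <:+ a')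
    (ha : a.length = ℓ) (hb' : b'.length = k) (hkp : k < p.length) (hpℓ : p.length < ℓ + k)
    (hpre : p <+: a ++ b) : ¬ p <:+ a' ++ b' := by
  intro hsuf
  set m := p.length - k
  have hlen : (p.take m).length = m := by rw [length_take]; omega
  refine hMU (p.take m) (fun h => ?_) (by omega) (hpre.take_prefix_of_append (by omega))
    (hsuf.take_suffix_of_append (by omega))
  simp only [h, length_nil] at hlen
  omega

theorem ncard_setOf_length_eq [Fintype α] (k : ℕ) :
    {l : List α | l.length = k}.ncard = Fintype.card α ^ k := by
  rw [← Nat.card_coe_set_eq]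
  exact (Nat.card_eq_fintype_card (α := Vector α k)).trans (card_vector k)

theorem ncard_image2_append {s t : Set (List α)} {ℓ : ℕ} (hs : ∀ a ∈ s, a.length = ℓ) :
    (Set.image2 (· ++ ·) s t).ncard = s.ncard * t.ncard := by
  rw [← Set.image_prod, Set.InjOn.ncard_image, Set.ncard_prod]
  rintro ⟨a, b⟩ hab ⟨a', b'⟩ hab' heq
  obtain ⟨rfl, rfl⟩ := append_inj heq (by rw [hs a hab.1, hs a' hab'.1])
  rfl

end List

theorem stmt_3_general (q n κ : ℕ) (hκ1 : 1 ≤ κ)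
    (C₁ : Finset (List (Fin q)))
    (h1len : ∀ w ∈ C₁, w.length = n - κ + 1)
    (h1MU : ∀ a ∈ C₁, ∀ b ∈ C₁, ∀ p : List (Fin q),
      p ≠ [] → p.length < n - κ + 1 → p <+: a → ¬ p <:+ b)
    (C : Set (List (Fin q)))
    (hC : C = {w | ∃ a ∈ C₁, ∃ b : List (Fin q), b.length = κ - 1 ∧ w = a ++ b}) :
    (∀ x ∈ C, ∀ y ∈ C, ∀ p : List (Fin q),
      κ ≤ p.length → p.length < n → p <+: x → ¬ p <:+ y) ∧
    C.ncard = C₁.card * q ^ (κ - 1) := by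
  have hCimage : C = Set.image2 (· ++ ·) (C₁ : Set (List (Fin q))) {b | b.length = κ - 1} := by
    ext w
    simp [hC, eq_comm]
  constructor
  · subst hC
    rintro x ⟨a, ha, b, -, rfl⟩ y ⟨a', ha', b', hb', rfl⟩ p hκp hpn
    exact List.not_suffix_append_of_prefix_append (h1MU a ha a' ha') (h1len a ha) hb'
      (by omega) (by omega)
  · rw [hCimage, List.ncard_image2_append h1len, Set.ncard_coe_finset,
      List.ncard_setOf_length_eq, Fintype.card_fin]

/-- Concatenating an MU code of length n-κ+1 with all sequences of length κ-1 gives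
a κ-WMU code of size |C₁| · q^{κ-1}. -/
theorem stmt_3 (q n κ : ℕ) (hκ1 : 1 ≤ κ) (hκn : κ ≤ n)
    (C₁ : Finset (List (Fin q)))
    (h1len : ∀ w ∈ C₁, w.length = n - κ + 1)
    (h1MU : ∀ a ∈ C₁, ∀ b ∈ C₁, ∀ p : List (Fin q),
      p ≠ [] → p.length < n - κ + 1 → p <+: a → ¬ p <:+ b)
    (C : Set (List (Fin q)))
    (hC : C = {w | ∃ a ∈ C₁, ∃ b : List (Fin q), b.length = κ - 1 ∧ w = a ++ b}) :
    (∀ x ∈ C, ∀ y ∈ C, ∀ p : List (Fin q),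
      κ ≤ p.length → p.length < n → p <+: x → ¬ p <:+ y) ∧
    C.ncard = C₁.card * q ^ (κ - 1) :=
  stmt_3_general q n κ hκ1 C₁ h1len h1MU C hC
end

section
/- Fix integers n ≥ 2 and 1 ≤ ℓ ≤ n-1, and let C ⊆ Σ^n (with 0 ∈ Σ, |Σ| = q) be the set of all sequences a = (a₁,…,a_n) such that: a starts with ℓ consecutive zeros, a_{ℓ+1} ≠ 0, a_n ≠ 0, and the substring (a_{ℓ+2},…,a_{n-1}) does not contain ℓ consecutive zeros. Then C is a mutually uncorrelated code. -/
/-- The Levenshtein–Gilbert construction: sequences starting with ℓ zeros, with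
a_{ℓ+1} ≠ 0, a_n ≠ 0, and no run of ℓ zeros inside positions ℓ+2,…,n-1, form a
mutually uncorrelated code. -/
theorem stmt_5 (q n ℓ : ℕ) [NeZero q] (hn : 2 ≤ n) (hℓ1 : 1 ≤ ℓ) (hℓ2 : ℓ ≤ n - 1)
    (C : Set (Fin n → Fin q))
    (hC : C = {a | (∀ (i : ℕ) (hi : i < ℓ), a ⟨i, by omega⟩ = 0) ∧
      a ⟨ℓ, by omega⟩ ≠ 0 ∧ a ⟨n - 1, by omega⟩ ≠ 0 ∧
      ¬ ∃ i : ℕ, ∃ h1 : ℓ + 1 ≤ i, ∃ h2 : i + ℓ ≤ n - 1,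
        ∀ (j : ℕ) (hj : j < ℓ), a ⟨i + j, by omega⟩ = 0}) :
    ∀ a ∈ C, ∀ b ∈ C, ∀ (l : ℕ), 1 ≤ l → ∀ (hl : l < n),
      ¬ ∀ (i : ℕ) (hi : i < l), a ⟨i, by omega⟩ = b ⟨n - l + i, by omega⟩ := by
  subst hC
  rintro a ⟨haz, haℓ, han, -⟩ b ⟨hbz, hbℓ, hbn, hbno⟩ l hl1 hl hEq
  by_cases hcase : l ≤ ℓ
  · -- last symbol of b is a_{l-1} = 0
    have h1 : a ⟨l - 1, by omega⟩ = b ⟨n - l + (l - 1), by omega⟩ := hEq (l - 1) (by omega)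
    have he : (⟨n - l + (l - 1), by omega⟩ : Fin n) = ⟨n - 1, by omega⟩ := by
      simp only [Fin.mk.injEq]; omega
    rw [haz (l - 1) (by omega), he] at h1
    exact hbn h1.symm
  · push_neg at hcase
    by_cases h2 : n ≤ l + ℓ
    · -- b_ℓ equals a_{l+ℓ-n} = 0
      have h1 : a ⟨l + ℓ - n, by omega⟩ = b ⟨n - l + (l + ℓ - n), by omega⟩ :=
        hEq (l + ℓ - n) (by omega)
      have he : (⟨n - l + (l + ℓ - n), by omega⟩ : Fin n) = ⟨ℓ, by omega⟩ := by
        simp only [Fin.mk.injEq]; omega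
      rw [haz (l + ℓ - n) (by omega), he] at h1
      exact hbℓ h1.symm
    · -- b has a run of ℓ zeros starting at n - l
      apply hbno
      refine ⟨n - l, by omega, by omega, ?_⟩
      intro j hj
      have h1 : a ⟨j, by omega⟩ = b ⟨n - l + j, by omega⟩ := hEq j (by omega)
      rw [haz j hj] at h1
      exact h1.symm
end

section
/- Let C₁ be an [n, κ-1, d] cyclic linear code over F_q, and let e = (1,0,…,0). Then the coset C = { a + e : a ∈ C₁ } is a κ-weakly mutually uncorrelated code with minimum Hamming distance d. -/
/-!
Write `a = a₁ + e`, `b = b₁ + e` with `a₁, b₁ ∈ C₁`. If the length-`l` prefix of `a` equals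
the length-`l` suffix of `b`, then the codeword `u = shift^{n-l} b₁ - a₁` of `C₁` agrees with
`e` on its first `l` coordinates: `u 0 = 1` followed by `l - 1` zeros. The cyclic shifts of
`u` by `0, …, l - 1` are then linearly independent (restricted to the first `l` coordinates
they form a triangular matrix with diagonal `u 0`), so `l ≤ dim C₁ = κ - 1 < l`.
The distance is unchanged by translating by `e`.
-/

open Module

lemma isUpperTriangular_shifts {R : Type*} [Zero R] {n k : ℕ} [NeZero n] (hk : k ≤ n)
    {c : Fin n → R} (hz : ∀ i : Fin n, i ≠ 0 → (i : ℕ) < k → c i = 0) :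
    Matrix.IsUpperTriangular
      (Matrix.of fun i j : Fin k => c (Fin.castLE hk i - Fin.castLE hk j)) := by
  intro i j (hji : j < i)
  have hval : ((Fin.castLE hk i - Fin.castLE hk j : Fin n) : ℕ) = i - j :=
    Fin.coe_sub_iff_le.2 (Fin.le_def.2 (le_of_lt hji))
  exact hz _ (fun h => by rw [h, Fin.val_zero] at hval; omega) (by rw [hval]; omega)

lemma shift_sub_apply_of_overlap {G : Type*} [AddCommGroup G] {n l : ℕ} [NeZero n]
    (hl : l < n) {a b e : Fin n → G} (he : ∀ j : Fin n, j ≠ 0 → e j = 0)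
    (hoverlap : ∀ (i : ℕ) (hi : i < l), (a + e) ⟨i, by omega⟩ = (b + e) ⟨n - l + i, by omega⟩)
    (i : Fin n) (hi : (i : ℕ) < l) : b (i + ⟨n - l, by omega⟩) - a i = e i := by
  have hidx : i + ⟨n - l, by omega⟩ = ⟨n - l + i, by omega⟩ := by
    ext; rw [Fin.val_add, Nat.mod_eq_of_lt (by simp; omega)]; simp; omega
  have hsuffix : (⟨n - l + i, by omega⟩ : Fin n) ≠ 0 := by
    rw [Ne, Fin.ext_iff, Fin.val_mk, Fin.val_zero]; omega
  have := hoverlap i hi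
  rw [Pi.add_apply, Pi.add_apply, he _ hsuffix, add_zero] at this
  rw [hidx, ← this, add_sub_cancel_left]

section Cyclic

variable {F : Type*} [Field F] {n : ℕ} [NeZero n]

lemma cyclic_shift_mem {C : Submodule F (Fin n → F)}
    (hcyc : ∀ c ∈ C, (fun i : Fin n => c (i + 1)) ∈ C) {c : Fin n → F} (hc : c ∈ C)
    (t : Fin n) : (fun i => c (i + t)) ∈ C := by
  open Fin.NatCast in
  have hshift : ∀ m : ℕ, (fun i => c (i + (m : Fin n))) ∈ C := by
    intro m
    induction m with
    | zero => simpa using hc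
    | succ m ih =>
      convert hcyc _ ih using 2 with i
      push_cast
      abel_nf
  simpa using hshift t

lemma le_finrank_of_zero_run {C : Submodule F (Fin n → F)}
    (hcyc : ∀ c ∈ C, (fun i : Fin n => c (i + 1)) ∈ C) {c : Fin n → F} (hc : c ∈ C)
    (h0 : c 0 ≠ 0) {k : ℕ} (hk : k ≤ n)
    (hz : ∀ i : Fin n, i ≠ 0 → (i : ℕ) < k → c i = 0) :
    k ≤ finrank F C := by
  set M := Matrix.of fun i j : Fin k => c (Fin.castLE hk i - Fin.castLE hk j)
  have hdet : M.det ≠ 0 := by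
    rw [Matrix.det_of_isUpperTriangular (isUpperTriangular_shifts hk hz)]
    simp [h0]
  set v : Fin k → Fin n → F := fun j i => c (i - Fin.castLE hk j)
  have hv : LinearIndependent F v :=
    LinearIndependent.of_comp (LinearMap.funLeft F F (Fin.castLE hk))
      (Matrix.linearIndependent_cols_of_det_ne_zero hdet)
  have hvC : ∀ j, v j ∈ C := fun j => by
    simpa [v, sub_eq_add_neg] using cyclic_shift_mem hcyc hc (-Fin.castLE hk j)
  calc k = finrank F (Submodule.span F (Set.range v)) := by
        rw [finrank_span_eq_card hv, Fintype.card_fin]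
    _ ≤ finrank F C := Submodule.finrank_mono (Submodule.span_le.2 (Set.range_subset_iff.2 hvC))

end Cyclic

/-- Construction: the coset C₁ + e of an [n, κ-1, d] cyclic code C₁, where
e = (1,0,…,0), is a κ-weakly mutually uncorrelated code of minimum Hamming
distance d. -/
theorem stmt_7 (F : Type*) [Field F] [DecidableEq F] (n κ d : ℕ) [NeZero n]
    (hκ : 1 ≤ κ)
    (C₁ : Submodule F (Fin n → F))
    (hcyc : ∀ c ∈ C₁, (fun i : Fin n => c (i + 1)) ∈ C₁)
    (hdim : Module.finrank F C₁ = κ - 1)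
    (hdist : ∀ a ∈ C₁, ∀ b ∈ C₁, a ≠ b → d ≤ hammingDist a b)
    (e : Fin n → F) (he : e = fun i => if i = 0 then 1 else 0)
    (C : Set (Fin n → F)) (hC : C = {x | ∃ a ∈ C₁, x = a + e}) :
    (∀ a ∈ C, ∀ b ∈ C, ∀ (l : ℕ), κ ≤ l → ∀ (hl : l < n),
      ¬ ∀ (i : ℕ) (hi : i < l), a ⟨i, by omega⟩ = b ⟨n - l + i, by omega⟩) ∧
    (∀ a ∈ C, ∀ b ∈ C, a ≠ b → d ≤ hammingDist a b) := by
  subst hC he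
  refine ⟨?_, ?_⟩
  · rintro _ ⟨a, ha, rfl⟩ _ ⟨b, hb, rfl⟩ l hκl hl hoverlap
    have hu := shift_sub_apply_of_overlap hl (fun j hj => if_neg hj) hoverlap
    have hrun := le_finrank_of_zero_run hcyc (sub_mem (cyclic_shift_mem hcyc hb _) ha)
      (((hu 0 (by simp; omega)).trans (if_pos rfl)).trans_ne one_ne_zero) hl.le
      (fun i hi0 hil => (hu i hil).trans (if_neg hi0))
    omega
  · rintro _ ⟨a, ha, rfl⟩ _ ⟨b, hb, rfl⟩ hab
    calc d ≤ hammingDist a b := hdist a ha b hb (by rintro rfl; exact hab rfl)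
      _ = hammingDist (a + _) (b + _) := (hammingDist_comp _ fun _ => add_left_injective _).symm
end

section
/- Fix positive integers t, ℓ and a binary code C_H of length n_H = t(ℓ-1). For b ∈ C_H define a(b) = 0^ℓ 1 b₁^{ℓ-1} 1 b_ℓ^{2(ℓ-1)} 1 ⋯ b_{(t-1)(ℓ-1)+1}^{t(ℓ-1)} 1, i.e., the word obtained by prefixing ℓ zeros and then interleaving the t blocks of b of length ℓ-1 with single 1s (a 1 before each block and a final 1). Then C_parse = { a(b) : b ∈ C_H } ⊆ {0,1}^n with n = (t+1)ℓ+1 is a mutually uncorrelated code, |C_parse| = |C_H|, and the minimum Hamming distance of C_parse equals that of C_H. -/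
/-!
Write `b = c₁ ⋯ c_t` with blocks `cᵢ` of length `ℓ - 1`; then
`a(b) = 0^ℓ (1 c₁) (1 c₂) ⋯ (1 c_t) 1`, so `a(b)` is `0` at every position `< ℓ` and `1` at every
position `kℓ`, `1 ≤ k ≤ t + 1`. If a nonempty proper prefix `p` of `a(b)` were the suffix of
`a(b')` starting at position `r ≥ 1`, the least multiple `kℓ ≥ r` would fall inside `p` and within
its leading run of zeros, while `a(b')` has a `1` there. Since `a(b)` and `a(b')` coincide outside
the copies of the blocks, the map preserves Hamming distance, hence is also injective.
-/

/-- The parsing map: b ↦ 0^ℓ 1 B₁ 1 B₂ 1 ⋯ B_t 1, where B₁,…,B_t are the blocks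
of b of length ℓ-1. (Here `false` plays the role of 0 and `true` of 1.) -/
def parse (ℓ : ℕ) (b : List Bool) : List Bool :=
  List.replicate ℓ false ++ true :: ((b.toChunks (ℓ - 1)).map (fun c => c ++ [true])).flatten

/-- Hamming distance between two lists of equal length. -/
def listHD (a b : List Bool) : ℕ :=
  ((a.zip b).filter fun p => p.1 != p.2).length

namespace List

variable {α : Type*}

theorem toChunks_go_append {n : ℕ} (rest xs : List α) (acc₁ : Array α) (acc₂ : Array (List α))
    (h : acc₁.size + rest.length ≤ n) :
    toChunks.go n (rest ++ xs) acc₁ acc₂ = toChunks.go n xs (acc₁ ++ rest.toArray) acc₂ := by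
  induction rest generalizing acc₁ with
  | nil => simp
  | cons x rest ih =>
    rw [length_cons] at h
    rw [cons_append, toChunks.go, if_neg (by rw [beq_iff_eq]; omega),
      ih _ (by rw [Array.size_push]; omega)]
    simp

theorem toChunks_go_flatten {n : ℕ} (hn : 0 < n) (L : List (List α)) (hL : ∀ c ∈ L, c.length = n)
    (acc₁ : Array α) (acc₂ : Array (List α)) (h : acc₁.size = n) :
    toChunks.go n L.flatten acc₁ acc₂ = acc₂.toList ++ acc₁.toList :: L := by
  induction L generalizing acc₁ acc₂ with
  | nil => simp [toChunks.go]
  | cons c L ih =>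
    obtain ⟨x, c, rfl⟩ := exists_cons_of_ne_nil (ne_nil_of_length_pos (hL _ mem_cons_self ▸ hn))
    have hc : c.length + 1 = n := hL _ mem_cons_self
    have hx : ((Array.mkEmpty n).push x).size = 1 := rfl
    rw [flatten_cons, cons_append, toChunks.go, if_pos (by simp [h]),
      toChunks_go_append _ _ _ _ (by omega), ih (fun c' hc' => hL c' (mem_cons_of_mem _ hc')) _ _
        (by rw [Array.size_append, hx, size_toArray]; omega)]
    simp

theorem toChunks_flatten {n : ℕ} (hn : 0 < n) (L : List (List α)) (hL : ∀ c ∈ L, c.length = n) :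
    L.flatten.toChunks n = L := by
  obtain _ | ⟨c, L⟩ := L
  · simp [toChunks]
  obtain ⟨x, c, rfl⟩ := exists_cons_of_ne_nil (ne_nil_of_length_pos (hL _ mem_cons_self ▸ hn))
  have hc : c.length + 1 = n := hL _ mem_cons_self
  have hx : #[x].size = 1 := rfl
  rw [flatten_cons, cons_append, toChunks.eq_3 _ _ _ (by omega),
    toChunks_go_append _ _ _ _ (by omega),
    toChunks_go_flatten hn _ (fun c' hc' => hL c' (mem_cons_of_mem _ hc')) _ _
      (by rw [Array.size_append, hx, size_toArray]; omega)]
  simp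

theorem exists_flatten_eq_of_length_eq_mul {n t : ℕ} {l : List α} (hl : l.length = t * n) :
    ∃ L : List (List α), L.length = t ∧ (∀ c ∈ L, c.length = n) ∧ L.flatten = l := by
  have hsum : (replicate t n).sum = l.length := by simp [hl]
  refine ⟨(replicate t n).splitLengths l, by simp, fun c hc => ?_, flatten_splitLengths l _ hsum.ge⟩
  have := map_splitLengths_length l _ hsum.le
  exact eq_of_mem_replicate (this ▸ mem_map_of_mem hc)

theorem cons_flatten_map_append_singleton (a : α) (L : List (List α)) :
    a :: (L.map (· ++ [a])).flatten = (L.map (a :: ·)).flatten ++ [a] := by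
  induction L with
  | nil => rfl
  | cons c L ih => simp [ih]

theorem length_flatten_map_cons (a : α) {n : ℕ} {L : List (List α)}
    (hL : ∀ c ∈ L, c.length = n) : (L.map (a :: ·)).flatten.length = L.length * (n + 1) := by
  induction L with
  | nil => simp
  | cons c L ih =>
    simp only [map_cons, flatten_cons, length_append, length_cons,
      hL c mem_cons_self, ih fun c' hc' => hL c' (mem_cons_of_mem _ hc')]
    ring

theorem getElem?_flatten_map_cons_append_singleton (a : α) {n : ℕ} {L : List (List α)}
    (hL : ∀ c ∈ L, c.length = n) {k : ℕ} (hk : k ≤ L.length) :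
    ((L.map (a :: ·)).flatten ++ [a])[k * (n + 1)]? = some a := by
  induction L generalizing k with
  | nil => simp_all
  | cons c L ih =>
    obtain _ | k := k
    · simp
    have hc : (a :: c).length = n + 1 := by simp [hL c mem_cons_self]
    rw [map_cons, flatten_cons, append_assoc, getElem?_append_right (by rw [hc]; nlinarith),
      hc, show (k + 1) * (n + 1) - (n + 1) = k * (n + 1) by rw [add_one_mul, Nat.add_sub_cancel]]
    exact ih (fun c' hc' => hL c' (mem_cons_of_mem _ hc')) (by simpa using hk)

end List

open List

theorem listHD_append {u v u' v' : List Bool} (h : u.length = u'.length) :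
    listHD (u ++ v) (u' ++ v') = listHD u u' + listHD v v' := by
  rw [listHD, zip_append h, filter_append, length_append, listHD, listHD]

theorem listHD_cons_cons (a : Bool) (u v : List Bool) : listHD (a :: u) (a :: v) = listHD u v := by
  simp [listHD]

theorem listHD_self (u : List Bool) : listHD u u = 0 := by
  induction u with
  | nil => rfl
  | cons a u ih => rwa [listHD_cons_cons]

theorem eq_of_listHD_eq_zero {u v : List Bool} (h : u.length = v.length) (h0 : listHD u v = 0) :
    u = v := by
  induction u generalizing v with
  | nil => simpa using h.symm
  | cons x u ih =>
    obtain _ | ⟨y, v⟩ := v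
    · simp at h
    obtain rfl : x = y := by by_contra hxy; simp [listHD, hxy] at h0
    rw [listHD_cons_cons] at h0
    rw [ih (by simpa using h) h0]

theorem listHD_flatten_map_cons (a : Bool) {L L' : List (List Bool)}
    (h : Forall₂ (fun c c' => c.length = c'.length) L L') :
    listHD (L.map (a :: ·)).flatten (L'.map (a :: ·)).flatten = listHD L.flatten L'.flatten := by
  induction h with
  | nil => rfl
  | cons hcc' _ ih =>
    simp only [map_cons, flatten_cons]
    rw [listHD_append (by simp [hcc']), listHD_append hcc', listHD_cons_cons, ih]

theorem not_suffix_of_prefix {ℓ t : ℕ} {x y p : List Bool}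
    (hx : ∀ i < ℓ, x[i]? = some false) (hy : ∀ k, 1 ≤ k → k ≤ t + 1 → y[k * ℓ]? = some true)
    (hylen : y.length = (t + 1) * ℓ + 1) (hp : p ≠ []) (hpy : p.length < y.length)
    (hpx : p <+: x) : ¬ p <:+ y := by
  rintro ⟨r, rfl⟩
  obtain ⟨s, rfl⟩ := hpx
  have hp0 : 0 < p.length := length_pos_iff.2 hp
  rw [length_append] at hylen hpy
  have hℓ : 0 < ℓ := by
    by_contra h
    simp only [show ℓ = 0 by omega, mul_zero] at hylen
    omega
  have hk_lo := Nat.lt_div_mul_add (a := r.length + ℓ - 1) hℓ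
  have hk_hi := Nat.div_mul_le_self (r.length + ℓ - 1) ℓ
  -- `k = ⌈|r| / ℓ⌉`: the first multiple of `ℓ` at or after the start of `p` in `y`
  generalize (r.length + ℓ - 1) / ℓ = k at hk_lo hk_hi
  replace hk_lo : r.length ≤ k * ℓ := by omega
  replace hk_hi : k * ℓ < r.length + ℓ := by omega
  have hk1 : 1 ≤ k := Nat.pos_of_ne_zero (by rintro rfl; omega)
  have hkt : k ≤ t + 1 := by nlinarith
  have hkℓ : k * ℓ ≤ (t + 1) * ℓ := Nat.mul_le_mul_right ℓ hkt
  have := hy k hk1 hkt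
  rw [getElem?_append_right (by omega), ← getElem?_append_left (l₂ := s) (by omega),
    hx _ (by omega)] at this
  exact Bool.false_ne_true (Option.some_injective _ this)

section parse

variable {ℓ : ℕ}

theorem parse_flatten (hℓ : 2 ≤ ℓ) {L : List (List Bool)} (hL : ∀ c ∈ L, c.length = ℓ - 1) :
    parse ℓ L.flatten = replicate ℓ false ++ (L.map (true :: ·)).flatten ++ [true] := by
  rw [parse, toChunks_flatten (by omega) L hL, cons_flatten_map_append_singleton, append_assoc]

theorem parse_getElem?_of_lt (b : List Bool) {i : ℕ} (hi : i < ℓ) :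
    (parse ℓ b)[i]? = some false := by
  rw [parse, getElem?_append_left (by simpa), getElem?_replicate_of_lt hi]

variable {t : ℕ}

theorem length_parse (hℓ : 2 ≤ ℓ) {b : List Bool} (hb : b.length = t * (ℓ - 1)) :
    (parse ℓ b).length = (t + 1) * ℓ + 1 := by
  obtain ⟨L, hLt, hL, rfl⟩ := exists_flatten_eq_of_length_eq_mul hb
  rw [parse_flatten hℓ hL, length_append, length_append, length_flatten_map_cons _ hL,
    length_replicate, hLt, Nat.sub_add_cancel (by omega : 1 ≤ ℓ)]
  rw [length_singleton]
  ring

theorem parse_getElem?_mul (hℓ : 2 ≤ ℓ) {b : List Bool} (hb : b.length = t * (ℓ - 1)) {k : ℕ}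
    (hk1 : 1 ≤ k) (hk : k ≤ t + 1) : (parse ℓ b)[k * ℓ]? = some true := by
  obtain ⟨L, hLt, hL, rfl⟩ := exists_flatten_eq_of_length_eq_mul hb
  obtain ⟨k, rfl⟩ : ∃ j, k = j + 1 := ⟨k - 1, by omega⟩
  rw [parse_flatten hℓ hL, append_assoc,
    getElem?_append_right (by rw [length_replicate]; nlinarith)]
  simp only [length_replicate, add_one_mul, Nat.add_sub_cancel]
  have := getElem?_flatten_map_cons_append_singleton true hL (k := k) (by omega)
  rwa [Nat.sub_add_cancel (by omega : 1 ≤ ℓ)] at this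

theorem listHD_parse (hℓ : 2 ≤ ℓ) {b b' : List Bool} (hb : b.length = t * (ℓ - 1))
    (hb' : b'.length = t * (ℓ - 1)) : listHD (parse ℓ b) (parse ℓ b') = listHD b b' := by
  obtain ⟨L, hLt, hL, rfl⟩ := exists_flatten_eq_of_length_eq_mul hb
  obtain ⟨L', hLt', hL', rfl⟩ := exists_flatten_eq_of_length_eq_mul hb'
  have hLL' : Forall₂ (fun c c' => c.length = c'.length) L L' :=
    forall₂_iff_zip.2 ⟨hLt.trans hLt'.symm, fun hcc' =>
      (hL _ (of_mem_zip hcc').1).trans (hL' _ (of_mem_zip hcc').2).symm⟩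
  have hlen : (L.map (true :: ·)).flatten.length = (L'.map (true :: ·)).flatten.length := by
    rw [length_flatten_map_cons _ hL, length_flatten_map_cons _ hL', hLt, hLt']
  rw [parse_flatten hℓ hL, parse_flatten hℓ hL',
    listHD_append (by rw [length_append, length_append, hlen]), listHD_append rfl, listHD_self, listHD_flatten_map_cons _ hLL', listHD_self]
  simp

end parse

theorem stmt_12_general (t ℓ : ℕ) (hℓ : 2 ≤ ℓ)
    (CH : Finset (List Bool)) (hlen : ∀ b ∈ CH, b.length = t * (ℓ - 1)) :
    (∀ b ∈ CH, (parse ℓ b).length = (t + 1) * ℓ + 1) ∧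
    (∀ x ∈ CH.image (parse ℓ), ∀ y ∈ CH.image (parse ℓ), ∀ p : List Bool,
      p ≠ [] → p.length < (t + 1) * ℓ + 1 → p <+: x → ¬ p <:+ y) ∧
    (CH.image (parse ℓ)).card = CH.card ∧
    (∀ b ∈ CH, ∀ b' ∈ CH, listHD (parse ℓ b) (parse ℓ b') = listHD b b') := by
  have hlength b (hb : b ∈ CH) := length_parse hℓ (hlen b hb)
  have hHD b (hb : b ∈ CH) b' (hb' : b' ∈ CH) := listHD_parse hℓ (hlen b hb) (hlen b' hb')
  refine ⟨hlength, ?_, Finset.card_image_of_injOn fun b hb b' hb' h => ?_, hHD⟩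
  · simp only [Finset.mem_image]
    rintro _ ⟨b, -, rfl⟩ _ ⟨b', hb', rfl⟩ p hp hpl
    exact not_suffix_of_prefix (fun i => parse_getElem?_of_lt b)
      (fun k => parse_getElem?_mul hℓ (hlen b' hb')) (hlength b' hb') hp (hlength b' hb' ▸ hpl)
  · refine eq_of_listHD_eq_zero ((hlen b hb).trans (hlen b' hb').symm) ?_
    rw [← hHD b hb b' hb', h, listHD_self]

/-- The parsing code C_parse = {a(b) : b ∈ C_H} ⊆ {0,1}^{(t+1)ℓ+1} is mutually
uncorrelated, has the same cardinality as C_H, and preserves Hamming distances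
(hence has the same minimum Hamming distance as C_H). -/
theorem stmt_12 (t ℓ : ℕ) (ht : 1 ≤ t) (hℓ : 2 ≤ ℓ)
    (CH : Finset (List Bool)) (hlen : ∀ b ∈ CH, b.length = t * (ℓ - 1)) :
    (∀ b ∈ CH, (parse ℓ b).length = (t + 1) * ℓ + 1) ∧
    (∀ x ∈ CH.image (parse ℓ), ∀ y ∈ CH.image (parse ℓ), ∀ p : List Bool,
      p ≠ [] → p.length < (t + 1) * ℓ + 1 → p <+: x → ¬ p <:+ y) ∧
    (CH.image (parse ℓ)).card = CH.card ∧
    (∀ b ∈ CH, ∀ b' ∈ CH, listHD (parse ℓ b) (parse ℓ b') = listHD b b') :=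
  stmt_12_general t ℓ hℓ CH hlen
end

section
/- Let C ⊆ Σ^n be a κ-weakly mutually uncorrelated code with κ ≤ n/2, let A ⊆ C, and let s ≥ 1 and N = s·n. Define C_A(N) = { b₁b₂⋯b_s : b_i ∈ C \ A }. Then no word of C_A(N) contains any element of A as a contiguous substring. -/
lemma aux_16 (α : Type*) (n κ : ℕ) (hκ1 : 1 ≤ κ) (hκ : 2 * κ ≤ n)
    (C : Set (List α)) (hlen : ∀ w ∈ C, w.length = n)
    (hWMU : ∀ a ∈ C, ∀ b ∈ C, ∀ p : List α,
      κ ≤ p.length → p.length < n → p <+: a → ¬ p <:+ b)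
    (A : Set (List α)) (hA : A ⊆ C) :
    ∀ L : List (List α), (∀ x ∈ L, x ∈ C \ A) → ∀ a ∈ A, ¬ a <:+: L.flatten := by
  intro L
  induction L with
  | nil =>
    intro _ a ha hinf
    have han := hlen a (hA ha)
    have := hinf.length_le
    simp only [List.flatten_nil, List.length_nil, Nat.le_zero] at this
    omega
  | cons b L ih =>
    intro hmem a ha hinf
    obtain ⟨u, t, hst⟩ := hinf
    have hbC : b ∈ C := (hmem b (by simp)).1
    have hbn : b.length = n := hlen b hbC
    have han : a.length = n := hlen a (hA ha)
    rw [List.flatten_cons] at hst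
    by_cases hr : n ≤ u.length
    · refine ih (fun x hx => hmem x (by simp [hx])) a ha ⟨u.drop n, t, ?_⟩
      have := congrArg (List.drop n) hst
      simpa [List.drop_append, hbn, Nat.sub_eq_zero_of_le hr,
        List.append_assoc] using this
    · push_neg at hr
      by_cases hr0 : u.length = 0
      · have hu : u = [] := List.length_eq_zero_iff.mp hr0
        subst hu
        have hab : a = b := by
          have := congrArg (List.take n) hst
          simpa [List.take_append, hbn, han, Nat.sub_self] using this
        exact (hmem b (by simp)).2 (hab ▸ ha)
      · set r := u.length with hrdef
        have h0 : n - (u ++ a).length = 0 := by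
          rw [List.length_append, han]; omega
        have hb_eq : b = u ++ a.take (n - r) := by
          have := congrArg (List.take n) hst
          rw [List.take_left' hbn, List.take_append,
            List.take_append,
            List.take_of_length_le (show u.length ≤ n by omega),
            h0, List.take_zero, List.append_nil] at this
          exact this.symm
        have hrest : L.flatten = a.drop (n - r) ++ t := by
          have := congrArg (List.drop n) hst
          rw [List.drop_left' hbn, List.drop_append,
            List.drop_append,
            List.drop_of_length_le (show u.length ≤ n by omega),
            h0, List.drop_zero, List.nil_append] at this
          exact this.symm
        by_cases hcase : κ ≤ n - r
        · exact hWMU a (hA ha) b hbC (a.take (n - r))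
            (by rw [List.length_take]; omega) (by rw [List.length_take]; omega)
            (List.take_prefix _ _) ⟨u, hb_eq.symm⟩
        · have hrκ : κ ≤ r := by omega
          have hq : (a.drop (n - r)).length = r := by rw [List.length_drop]; omega
          cases L with
          | nil =>
            simp only [List.flatten_nil] at hrest
            have := congrArg List.length hrest
            simp only [List.length_nil, List.length_append, hq] at this
            omega
          | cons c L' =>
            have hcC : c ∈ C := (hmem c (by simp)).1
            have hcn : c.length = n := hlen c hcC
            have hqc : a.drop (n - r) <+: c := by
              rw [List.flatten_cons] at hrest
              have := congrArg (List.take r) hrest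
              rw [List.take_left' hq, List.take_append,
                (show r - c.length = 0 by omega), List.take_zero,
                List.append_nil] at this
              exact this ▸ List.take_prefix r c
            exact hWMU c hcC a (hA ha) (a.drop (n - r)) (by omega) (by omega)
              hqc (List.drop_suffix _ _)

/-- If C ⊆ Σ^n is κ-WMU with κ ≤ n/2 and A ⊆ C, then no concatenation of s blocks
from C \ A contains any element of A as a contiguous substring. -/
theorem stmt_16 (α : Type*) (n κ s : ℕ) (hκ1 : 1 ≤ κ) (hκ : 2 * κ ≤ n) (hs : 1 ≤ s)
    (C : Set (List α)) (hlen : ∀ w ∈ C, w.length = n)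
    (hWMU : ∀ a ∈ C, ∀ b ∈ C, ∀ p : List α,
      κ ≤ p.length → p.length < n → p <+: a → ¬ p <:+ b)
    (A : Set (List α)) (hA : A ⊆ C)
    (CA : Set (List α))
    (hCA : CA = {w | ∃ f : ℕ → List α, (∀ i, 1 ≤ i → i ≤ s → f i ∈ C \ A) ∧
      w = ((List.range s).map fun i => f (i + 1)).flatten}) :
    ∀ w ∈ CA, ∀ a ∈ A, ¬ a <:+: w := by
  subst hCA
  rintro w ⟨f, hf, rfl⟩ a ha
  refine aux_16 α n κ hκ1 hκ C hlen hWMU A hA _ ?_ a ha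
  intro x hx
  simp only [List.mem_map, List.mem_range] at hx
  obtain ⟨i, hi, rfl⟩ := hx
  exact hf (i + 1) (by omega) (by omega)
end

section
/- Let C₁, C₂ ⊆ {0,1}^n be disjoint sets such that no cyclic shift of any element of C₁ belongs to C₂. Let A = { aa : a ∈ C₁ } ⊆ {0,1}^{2n} (words formed by repeating a word of C₁ twice), and for s ≥ 3 let B = { g₁g₂⋯g_s : g_i ∈ C₂ } ⊆ {0,1}^{sn}. Then no word of B contains any word of A as a contiguous substring. -/
/-!
Write `w = g₁ ⋯ g_s` with every block of length `n`. If `aa` occurs in `w` after a prefix of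
length `t = q n + r` with `r < n`, then the block starting at position `(q + 1) n` lies entirely
inside the occurrence of `aa`, starting `n - r` letters into it, so it is the cyclic shift
`a.rotate (n - r)` of `a`, which is excluded.
-/

namespace List

variable {α : Type*}

theorem length_flatten_of_forall_length_eq {n : ℕ} {L : List (List α)}
    (hL : ∀ l ∈ L, l.length = n) : L.flatten.length = L.length * n := by
  rw [length_flatten, map_congr_left hL, map_const', sum_replicate_nat]

theorem take_drop_mul_flatten {n : ℕ} {L : List (List α)} (hL : ∀ l ∈ L, l.length = n)
    {k : ℕ} (hk : k < L.length) : (L.flatten.drop (k * n)).take n = L[k] := by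
  induction L generalizing k with
  | nil => simp at hk
  | cons l L ih =>
    have hl : l.length = n := hL l mem_cons_self
    cases k with
    | zero => simp [take_left' hl]
    | succ k =>
      rw [flatten_cons, add_one_mul, add_comm, ← hl, drop_length_add_append, hl]
      exact ih (fun l' hl' => hL l' (mem_cons_of_mem l hl')) (by simpa using hk)

theorem take_drop_append_self {a : List α} {j : ℕ} (hj : j ≤ a.length) :
    ((a ++ a).drop j).take a.length = a.rotate j := by
  rw [rotate_eq_drop_append_take hj, drop_append_of_le_length hj, take_append, length_drop,
    take_of_length_le (by simp)]
  congr 2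
  omega

theorem exists_rotate_mem_of_append_self_infix_flatten {n : ℕ} {L : List (List α)}
    (hL : ∀ l ∈ L, l.length = n) (hne : L ≠ []) {a : List α} (ha : a.length = n)
    (h : a ++ a <:+: L.flatten) : ∃ j, a.rotate j ∈ L := by
  subst ha
  rcases Nat.eq_zero_or_pos a.length with hn | hn
  · obtain ⟨l, hl⟩ := exists_mem_of_ne_nil L hne
    obtain rfl := length_eq_zero_iff.mp (hn ▸ hL l hl)
    exact ⟨0, by simpa [length_eq_zero_iff.mp hn] using hl⟩
  obtain ⟨u, v, huv⟩ := h
  set n := a.length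
  set q := u.length / n
  set r := u.length % n
  have hr : r < n := Nat.mod_lt _ hn
  have hqr : q * n + r = u.length := by rw [mul_comm]; exact Nat.div_add_mod _ _
  have hlen : u.length + 2 * n + v.length = L.length * n := by
    have := congrArg length huv
    simp only [length_append, length_flatten_of_forall_length_eq hL] at this
    omega
  have hstart : (q + 1) * n = u.length + (n - r) := by rw [add_one_mul]; omega
  have hk : q + 1 < L.length :=
    Nat.lt_of_mul_lt_mul_right (a := n) (by rw [hstart]; omega)
  refine ⟨n - r, ?_⟩
  have hblock := take_drop_mul_flatten hL hk
  rw [← huv, hstart, append_assoc, drop_length_add_append,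
    drop_append_of_le_length (by simp; omega), take_append_of_le_length (by simp; omega),
    take_drop_append_self (by omega)] at hblock
  exact hblock ▸ getElem_mem hk

end List

theorem stmt_18_general (n s : ℕ) (hs : 3 ≤ s)
    (C₁ C₂ : Set (List Bool))
    (h1len : ∀ w ∈ C₁, w.length = n) (h2len : ∀ w ∈ C₂, w.length = n)
    (hshift : ∀ a ∈ C₁, ∀ i : ℕ, (a.drop i ++ a.take i) ∉ C₂)
    (A : Set (List Bool)) (hA : A = {w | ∃ a ∈ C₁, w = a ++ a})
    (B : Set (List Bool))
    (hB : B = {w | ∃ f : ℕ → List Bool, (∀ i, 1 ≤ i → i ≤ s → f i ∈ C₂) ∧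
      w = ((List.range s).map fun i => f (i + 1)).flatten}) :
    ∀ w ∈ B, ∀ x ∈ A, ¬ x <:+: w := by
  subst hA hB
  rintro w ⟨f, hf, rfl⟩ x ⟨a, ha, rfl⟩ hinfix
  have hblocks : ∀ l ∈ (List.range s).map (fun i => f (i + 1)), l.length = n := by
    simp only [List.mem_map, List.mem_range, forall_exists_index, and_imp]
    rintro _ i hi rfl
    exact h2len _ (hf (i + 1) (by omega) (by omega))
  have hne : (List.range s).map (fun i => f (i + 1)) ≠ [] := by
    simp only [ne_eq, List.map_eq_nil_iff, List.range_eq_nil]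
    omega
  obtain ⟨j, hj⟩ :=
    List.exists_rotate_mem_of_append_self_infix_flatten hblocks hne (h1len a ha) hinfix
  obtain ⟨i, hi, hfi⟩ := List.mem_map.mp hj
  rw [List.mem_range] at hi
  rw [List.rotate_eq_drop_append_take_mod] at hfi
  exact hshift a ha _ (hfi ▸ hf (i + 1) (by omega) (by omega))

/-- Let C₁, C₂ ⊆ {0,1}^n be disjoint, with no cyclic shift of an element of C₁
belonging to C₂. Then no concatenation of s ≥ 3 blocks from C₂ contains a word
aa (a ∈ C₁) as a contiguous substring. -/
theorem stmt_18 (n s : ℕ) (hs : 3 ≤ s)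
    (C₁ C₂ : Set (List Bool))
    (h1len : ∀ w ∈ C₁, w.length = n) (h2len : ∀ w ∈ C₂, w.length = n)
    (hdisj : C₁ ∩ C₂ = ∅)
    (hshift : ∀ a ∈ C₁, ∀ i : ℕ, (a.drop i ++ a.take i) ∉ C₂)
    (A : Set (List Bool)) (hA : A = {w | ∃ a ∈ C₁, w = a ++ a})
    (B : Set (List Bool))
    (hB : B = {w | ∃ f : ℕ → List Bool, (∀ i, 1 ≤ i → i ≤ s → f i ∈ C₂) ∧
      w = ((List.range s).map fun i => f (i + 1)).flatten}) :
    ∀ w ∈ B, ∀ x ∈ A, ¬ x <:+: w :=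
  stmt_18_general n s hs C₁ C₂ h1len h2len hshift A hA B hB
end
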